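/- Let T be a finite index type and R a commutative ring. For each y ∈ T let n(y), and fix natural numbers m_s, m_t, d, p_s, p_t. For each y ∈ T let D_y be an n(y) × d matrix over R (the previous-layer embedding matrix of type-y nodes), let Ā_{y,s} be an m_s × n(y) matrix and Q_{y,s} a d × p_s matrix (the source-type aggregation and transform blocks), and let Ā_{y,t} be an m_t × n(y) matrix and Q_{y,t} a d × p_t matrix (the target-type aggregation and transform blocks). Define the source embedding H_s = Σ_{y ∈ T} Ā_{y,s} · D_y · Q_{y,s} and the target embedding H_t = Σ_{y ∈ T} Ā_{y,t} · D_y · Q_{y,t}. Let Ā_{·t} be the m_t × (Σ_{y} n(y)) matrix given by row-wise concatenation, Ā_{·t}(i, ⟨y,j⟩) = Ā_{y,t}(i,j), and let Q_{·t} be the (Σ_{y ∈ T} d) × p_t matrix given by column-wise stacking, Q_{·t}(⟨y,k⟩, j) = Q_{y,t}(k,j), and similarly define Ā_{·s} and Q_{·s}. Suppose there exists a matrix B with B · Ā_{·t} = 1 (a left inverse of Ā_{·t}) and a matrix C with Q_{·t} · C = 1 (a right inverse of Q_{·t}). Then H_s = (Ā_{·s} · B) · H_t · (C · Q_{·s});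 in particular H_s = A* · H_t · Q* for matrices A* and Q* constructed only from the aggregation matrices and the transform blocks. -/

import Mathlib

/-!
Stack the previous-layer embeddings `D_y` into one block matrix `D̄` (the block of type `y`
sits in block-row and block-column `y`). Then both embeddings share the middle factor:
`H_s = Ā_{·s} D̄ Q_{·s}` and `H_t = Ā_{·t} D̄ Q_{·t}`. Inserting `B Ā_{·t} = 1` and
`Q_{·t} C = 1` around `D̄` in the first factorization gives
`H_s = Ā_{·s} B (Ā_{·t} D̄ Q_{·t}) C Q_{·s} = (Ā_{·s} B) H_t (C Q_{·s})`.
-/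

open Matrix

namespace Matrix

section Stacking

variable {R : Type*} [Semiring R] {T : Type*} [Fintype T] {l k p : Type*}
  {m : T → Type*} [∀ y, Fintype (m y)]

/- `sigmaCols` and `prodRows` are the paper's stacked matrices `Ā_{·t}` and `Q_{·t}`;
`blockDiagonalSigmaProd` is `D̄`, indexed so that it fits between them. -/
def sigmaCols (A : ∀ y, Matrix l (m y) R) : Matrix l (Σ y, m y) R :=
  of fun i a => A a.1 i a.2

def prodCols (N : T → Matrix l k R) : Matrix l (T × k) R :=
  of fun i b => N b.1 i b.2

def prodRows (Q : T → Matrix k p R) : Matrix (T × k) p R :=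
  of fun b j => Q b.1 b.2 j

def blockDiagonalSigmaProd [DecidableEq T] (D : ∀ y, Matrix (m y) k R) :
    Matrix (Σ y, m y) (T × k) R :=
  of fun a b => if a.1 = b.1 then D a.1 a.2 b.2 else 0

theorem sigmaCols_mul_blockDiagonalSigmaProd [DecidableEq T] (A : ∀ y, Matrix l (m y) R)
    (D : ∀ y, Matrix (m y) k R) :
    sigmaCols A * blockDiagonalSigmaProd D = prodCols fun y => A y * D y := by
  ext i ⟨y, c⟩
  simp only [mul_apply, Fintype.sum_sigma, sigmaCols, prodCols, blockDiagonalSigmaProd, of_apply]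
  rw [Finset.sum_eq_single y]
  · simp
  · intro z _ hz
    simp [hz]
  · simp

theorem prodCols_mul_prodRows [Fintype k] (N : T → Matrix l k R) (Q : T → Matrix k p R) :
    prodCols N * prodRows Q = ∑ y, N y * Q y := by
  ext i j
  simp [mul_apply, sum_apply, Fintype.sum_prod_type, prodCols, prodRows]

theorem sum_mul_mul_eq_sigmaCols_mul_blockDiagonalSigmaProd_mul_prodRows [Fintype k]
    [DecidableEq T] (A : ∀ y, Matrix l (m y) R) (D : ∀ y, Matrix (m y) k R)
    (Q : T → Matrix k p R) :
    ∑ y, A y * D y * Q y = sigmaCols A * blockDiagonalSigmaProd D * prodRows Q := by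
  rw [sigmaCols_mul_blockDiagonalSigmaProd, prodCols_mul_prodRows]

end Stacking

theorem eq_mul_mul_of_eq_mul_mul_of_mul_eq_one {R : Type*} [Semiring R]
    {a b a' b' u v : Type*} [Fintype u] [Fintype v] [Fintype a'] [Fintype b']
    [DecidableEq u] [DecidableEq v]
    {X : Matrix a b R} {Y : Matrix a' b' R} {P : Matrix a u R} {P' : Matrix a' u R}
    {M : Matrix u v R} {Q : Matrix v b R} {Q' : Matrix v b' R}
    {B : Matrix u a' R} {C : Matrix b' v R}
    (hX : X = P * M * Q) (hY : Y = P' * M * Q') (hB : B * P' = 1) (hC : Q' * C = 1) :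
    X = P * B * Y * (C * Q) :=
  calc X = P * (B * P') * M * ((Q' * C) * Q) := by
        rw [hX, hB, hC, Matrix.mul_one, Matrix.one_mul]
    _ = P * B * Y * (C * Q) := by simp only [hY, Matrix.mul_assoc]

end Matrix

/-- Theorem 1 of the paper (precise form): with per-type source/target aggregation and
transform blocks, source embedding `H_s = Σ_y Ā_{y,s} · D_y · Q_{y,s}` and target embedding
`H_t = Σ_y Ā_{y,t} · D_y · Q_{y,t}`, a left inverse `B` of the stacked target adjacency
matrix `Ā_{·t}` and a right inverse `C` of the stacked target transform matrix `Q_{·t}`,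
we have `H_s = (Ā_{·s} · B) · H_t · (C · Q_{·s})`; in particular `H_s = A* · H_t · Q*`. -/
theorem hgnn_ktn_theorem1
    {R : Type*} [CommRing R] {T : Type*} [Fintype T] [DecidableEq T]
    {ms mt d ps pt : ℕ} {n : T → ℕ}
    (D : ∀ y : T, Matrix (Fin (n y)) (Fin d) R)
    (As : ∀ y : T, Matrix (Fin ms) (Fin (n y)) R)
    (Qs : ∀ y : T, Matrix (Fin d) (Fin ps) R)
    (At : ∀ y : T, Matrix (Fin mt) (Fin (n y)) R)
    (Qt : ∀ y : T, Matrix (Fin d) (Fin pt) R)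
    (Hs : Matrix (Fin ms) (Fin ps) R) (hHs : Hs = ∑ y : T, As y * D y * Qs y)
    (Ht : Matrix (Fin mt) (Fin pt) R) (hHt : Ht = ∑ y : T, At y * D y * Qt y)
    (AbarT : Matrix (Fin mt) ((y : T) × Fin (n y)) R)
    (hAbarT : ∀ (i : Fin mt) (y : T) (j : Fin (n y)), AbarT i ⟨y, j⟩ = At y i j)
    (QbarT : Matrix (T × Fin d) (Fin pt) R)
    (hQbarT : ∀ (y : T) (k : Fin d) (j : Fin pt), QbarT (y, k) j = Qt y k j)
    (AbarS : Matrix (Fin ms) ((y : T) × Fin (n y)) R)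
    (hAbarS : ∀ (i : Fin ms) (y : T) (j : Fin (n y)), AbarS i ⟨y, j⟩ = As y i j)
    (QbarS : Matrix (T × Fin d) (Fin ps) R)
    (hQbarS : ∀ (y : T) (k : Fin d) (j : Fin ps), QbarS (y, k) j = Qs y k j)
    (B : Matrix ((y : T) × Fin (n y)) (Fin mt) R) (hB : B * AbarT = 1)
    (C : Matrix (Fin pt) (T × Fin d) R) (hC : QbarT * C = 1) :
    Hs = (AbarS * B) * Ht * (C * QbarS) ∧
      ∃ (Astar : Matrix (Fin ms) (Fin mt) R) (Qstar : Matrix (Fin pt) (Fin ps) R),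
        Hs = Astar * Ht * Qstar := by
  have hAS : AbarS = sigmaCols As := by ext i ⟨y, j⟩; exact hAbarS i y j
  have hAT : AbarT = sigmaCols At := by ext i ⟨y, j⟩; exact hAbarT i y j
  have hQS : QbarS = prodRows Qs := by ext ⟨y, k⟩ j; exact hQbarS y k j
  have hQT : QbarT = prodRows Qt := by ext ⟨y, k⟩ j; exact hQbarT y k j
  have hSource : Hs = AbarS * blockDiagonalSigmaProd D * QbarS := by
    rw [hHs, hAS, hQS, sum_mul_mul_eq_sigmaCols_mul_blockDiagonalSigmaProd_mul_prodRows]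
  have hTarget : Ht = AbarT * blockDiagonalSigmaProd D * QbarT := by
    rw [hHt, hAT, hQT, sum_mul_mul_eq_sigmaCols_mul_blockDiagonalSigmaProd_mul_prodRows]
  have hMain := eq_mul_mul_of_eq_mul_mul_of_mul_eq_one hSource hTarget hB hC
  exact ⟨hMain, _, _, hMain⟩
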